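/- arXiv:2111.14209 — 2 statements merged into one kernel-verified Lean document; each statement's English description precedes it below -/
import Mathlib

section
/- Fix M > 0 and ε > 0 with 0 < 2ε − 6M³ − 9M² − 3M. Suppose A ⊆ B_M(0), |Θ(ν)| ≤ M for all ν ∈ M_1(Ω̄×A), b(t,x,α;ν) = b₁(t,x,ν) + α, and L(t,x,α;ν) = ℓ(t,x,ν) + φ(α·Θ(ν)) + ε|α|² with φ : ℝ → ℝ convex and differentiable with Lip(φ') ≤ some constant and ‖φ'‖_∞ ≤ 2ε − Lip(φ')M². Let α_i := α*(t,x,p_i;ν_i) denote the unique minimizer characterized by the first-order condition p_i + 2εα_i + φ'(α_i·Θ(ν_i))Θ(ν_i) = 0 for i = 1,2. Then |α₁ − α₂| ≤ (2ε − Lip(φ')M²)^{−1} · ( |p₁ − p₂| + |∫_{Ω̄×A} α d(ν₁−ν₂)(x,α)| ). -/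
/-!
Subtracting the two first-order conditions and pairing with `δ = α₁ - α₂` gives
`2ε‖δ‖² = -⟪p₁ - p₂, δ⟫ - (φ'(s₁) - φ'(s₂))⟪Θ₁, δ⟫ - φ'(s₂)⟪Θ₁ - Θ₂, δ⟫` with `sᵢ = ⟪αᵢ, Θᵢ⟫`.
Since `|s₁ - s₂| ≤ M‖δ‖ + M‖Θ₁ - Θ₂‖`, the Lipschitz bound on `φ'` costs `Lip(φ')M²‖δ‖²`, which
is absorbed into the left-hand side, and the bound on `‖φ'‖_∞` controls the last term.
-/

open Real MeasureTheory Set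

open scoped NNReal RealInnerProductSpace

section FirstOrderCondition

variable {E : Type*} [NormedAddCommGroup E] [InnerProductSpace ℝ E]

theorem abs_inner_sub_inner_le (a₁ a₂ b₁ b₂ : E) :
    |⟪a₁, b₁⟫ - ⟪a₂, b₂⟫| ≤ ‖a₁ - a₂‖ * ‖b₁‖ + ‖a₂‖ * ‖b₁ - b₂‖ := by
  have hsplit : ⟪a₁, b₁⟫ - ⟪a₂, b₂⟫ = ⟪a₁ - a₂, b₁⟫ + ⟪a₂, b₁ - b₂⟫ := by
    simp only [inner_sub_left, inner_sub_right]
    ring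
  rw [hsplit]
  exact (abs_add_le _ _).trans
    (add_le_add (abs_real_inner_le_norm _ _) (abs_real_inner_le_norm _ _))

variable {g : ℝ → ℝ} {c : ℝ} {p₁ p₂ α₁ α₂ Θ₁ Θ₂ : E}

theorem inner_sub_self_of_firstOrder
    (h₁ : p₁ + c • α₁ + g ⟪α₁, Θ₁⟫ • Θ₁ = 0) (h₂ : p₂ + c • α₂ + g ⟪α₂, Θ₂⟫ • Θ₂ = 0) :
    c * ‖α₁ - α₂‖ ^ 2 = -⟪p₁ - p₂, α₁ - α₂⟫
      - (g ⟪α₁, Θ₁⟫ - g ⟪α₂, Θ₂⟫) * ⟪Θ₁, α₁ - α₂⟫ - g ⟪α₂, Θ₂⟫ * ⟪Θ₁ - Θ₂, α₁ - α₂⟫ := by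
  have hvec : c • (α₁ - α₂) =
      (p₂ - p₁) + g ⟪α₂, Θ₂⟫ • Θ₂ - g ⟪α₁, Θ₁⟫ • Θ₁ := by
    linear_combination (norm := module) h₁ - h₂
  rw [← real_inner_self_eq_norm_sq, ← real_inner_smul_left, hvec]
  simp only [inner_sub_left, inner_add_left, real_inner_smul_left]
  ring

theorem mul_norm_sub_sq_le_of_firstOrder {K : ℝ≥0} {C M : ℝ} (hg : LipschitzWith K g)
    (hgC : ∀ z, |g z| ≤ C) (hΘ₁ : ‖Θ₁‖ ≤ M) (hα₂ : ‖α₂‖ ≤ M)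
    (h₁ : p₁ + c • α₁ + g ⟪α₁, Θ₁⟫ • Θ₁ = 0) (h₂ : p₂ + c • α₂ + g ⟪α₂, Θ₂⟫ • Θ₂ = 0) :
    c * ‖α₁ - α₂‖ ^ 2 ≤ (‖p₁ - p₂‖ + K * M ^ 2 * ‖α₁ - α₂‖
      + (K * M ^ 2 + C) * ‖Θ₁ - Θ₂‖) * ‖α₁ - α₂‖ := by
  set δ := α₁ - α₂
  have hM : 0 ≤ M := (norm_nonneg _).trans hΘ₁
  have hpδ : -⟪p₁ - p₂, δ⟫ ≤ ‖p₁ - p₂‖ * ‖δ‖ :=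
    (neg_le_abs _).trans (abs_real_inner_le_norm _ _)
  have hΘ₁δ : |⟪Θ₁, δ⟫| ≤ M * ‖δ‖ :=
    (abs_real_inner_le_norm _ _).trans (by gcongr)
  have hs : |⟪α₁, Θ₁⟫ - ⟪α₂, Θ₂⟫| ≤ M * ‖δ‖ + M * ‖Θ₁ - Θ₂‖ :=
    (abs_inner_sub_inner_le _ _ _ _).trans (by rw [mul_comm M]; gcongr)
  have hgs : |g ⟪α₁, Θ₁⟫ - g ⟪α₂, Θ₂⟫| ≤ K * (M * ‖δ‖ + M * ‖Θ₁ - Θ₂‖) := by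
    rw [← Real.dist_eq]
    exact (hg.dist_le_mul _ _).trans (by rw [Real.dist_eq]; gcongr)
  have hlip : -((g ⟪α₁, Θ₁⟫ - g ⟪α₂, Θ₂⟫) * ⟪Θ₁, δ⟫)
      ≤ K * (M * ‖δ‖ + M * ‖Θ₁ - Θ₂‖) * (M * ‖δ‖) :=
    (neg_le_abs _).trans (by rw [abs_mul]; gcongr)
  have hC : 0 ≤ C := (abs_nonneg _).trans (hgC 0)
  have hsup : -(g ⟪α₂, Θ₂⟫ * ⟪Θ₁ - Θ₂, δ⟫) ≤ C * (‖Θ₁ - Θ₂‖ * ‖δ‖) :=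
    (neg_le_abs _).trans (by rw [abs_mul]; gcongr; exacts [hgC _, abs_real_inner_le_norm _ _])
  rw [inner_sub_self_of_firstOrder h₁ h₂]
  linear_combination hpδ + hlip + hsup

theorem mul_norm_sub_le_of_firstOrder {K : ℝ≥0} {C M : ℝ} (hg : LipschitzWith K g)
    (hgC : ∀ z, |g z| ≤ C) (hΘ₁ : ‖Θ₁‖ ≤ M) (hα₂ : ‖α₂‖ ≤ M)
    (h₁ : p₁ + c • α₁ + g ⟪α₁, Θ₁⟫ • Θ₁ = 0) (h₂ : p₂ + c • α₂ + g ⟪α₂, Θ₂⟫ • Θ₂ = 0) :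
    (c - K * M ^ 2) * ‖α₁ - α₂‖ ≤ ‖p₁ - p₂‖ + (K * M ^ 2 + C) * ‖Θ₁ - Θ₂‖ := by
  have hquad := mul_norm_sub_sq_le_of_firstOrder hg hgC hΘ₁ hα₂ h₁ h₂
  rcases (norm_nonneg (α₁ - α₂)).eq_or_lt with hδ | hδ
  · have hC : 0 ≤ C := (abs_nonneg _).trans (hgC 0)
    rw [← hδ, mul_zero]
    positivity
  · refine le_of_mul_le_mul_right ?_ hδ
    linear_combination hquad

end FirstOrderCondition

theorem optimal_control_lipschitz_general {d : ℕ}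
    (A : Set (EuclideanSpace ℝ (Fin d)))
    (M ε Lφ : ℝ) (hM : 0 < M) (h2ε : 2 * ε ≤ 1)
    (hAball : A ⊆ Metric.closedBall 0 M)
    (φ : ℝ → ℝ)
    (hLφ : 0 ≤ Lφ) (hφlip : LipschitzWith Lφ.toNNReal (deriv φ))
    (hLφsmall : Lφ < (2 * ε - 6 * M ^ 3 - 9 * M ^ 2 - 3 * M) / M ^ 2)
    (hφ'bdd : ∀ z, |deriv φ z| ≤ 2 * ε - Lφ * M ^ 2)
    (Θ₁ Θ₂ : EuclideanSpace ℝ (Fin d))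
    (hΘ₁M : ‖Θ₁‖ ≤ M)
    (p₁ p₂ α₁ α₂ : EuclideanSpace ℝ (Fin d)) (hα₂A : α₂ ∈ A)
    (hfoc₁ : p₁ + (2 * ε) • α₁ + (deriv φ (inner ℝ α₁ Θ₁ : ℝ)) • Θ₁ = 0)
    (hfoc₂ : p₂ + (2 * ε) • α₂ + (deriv φ (inner ℝ α₂ Θ₂ : ℝ)) • Θ₂ = 0) :
    ‖α₁ - α₂‖ ≤ (2 * ε - Lφ * M ^ 2)⁻¹ * (‖p₁ - p₂‖ + ‖Θ₁ - Θ₂‖) := by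
  have hc : 0 < 2 * ε - Lφ * M ^ 2 := by
    have := (lt_div_iff₀ (by positivity : (0 : ℝ) < M ^ 2)).mp hLφsmall
    nlinarith [pow_pos hM 3, pow_pos hM 2]
  have hα₂M : ‖α₂‖ ≤ M := mem_closedBall_zero_iff.mp (hAball hα₂A)
  have hest := mul_norm_sub_le_of_firstOrder hφlip hφ'bdd hΘ₁M hα₂M hfoc₁ hfoc₂
  rw [Real.coe_toNNReal _ hLφ] at hest
  rw [inv_mul_eq_div, le_div_iff₀ hc, mul_comm]
  have hΘ : 2 * ε * ‖Θ₁ - Θ₂‖ ≤ ‖Θ₁ - Θ₂‖ :=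
    mul_le_of_le_one_left (norm_nonneg _) h2ε
  linarith

/-- Proposition 4.6 (key estimate): for the quadratic-plus-interaction Lagrangian,
the optimal controls `αᵢ` characterized by the first-order condition
`pᵢ + 2ε αᵢ + φ'(αᵢ·Θ(νᵢ))Θ(νᵢ) = 0` satisfy the Lipschitz estimate
`|α₁ − α₂| ≤ (2ε − Lip(φ')M²)⁻¹ (|p₁ − p₂| + |∫ α d(ν₁−ν₂)|)`. -/
theorem optimal_control_lipschitz {d : ℕ}
    (Ω A : Set (EuclideanSpace ℝ (Fin d))) (hΩ : IsCompact Ω) (hA : IsCompact A)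
    (M ε Lφ : ℝ) (hM : 0 < M) (hε : 0 < ε)
    (hsmall : 0 < 2 * ε - 6 * M ^ 3 - 9 * M ^ 2 - 3 * M) (h2ε : 2 * ε ≤ 1)
    (hAball : A ⊆ Metric.closedBall 0 M)
    (φ : ℝ → ℝ) (hφconv : ConvexOn ℝ Set.univ φ) (hφdiff : Differentiable ℝ φ)
    (hLφ : 0 ≤ Lφ) (hφlip : LipschitzWith Lφ.toNNReal (deriv φ))
    (hLφsmall : Lφ < (2 * ε - 6 * M ^ 3 - 9 * M ^ 2 - 3 * M) / M ^ 2)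
    (hφ'bdd : ∀ z, |deriv φ z| ≤ 2 * ε - Lφ * M ^ 2)
    (ν₁ ν₂ : Measure (EuclideanSpace ℝ (Fin d) × EuclideanSpace ℝ (Fin d)))
    [IsFiniteMeasure ν₁] [IsFiniteMeasure ν₂]
    (hν₁ : ν₁ Set.univ ≤ 1) (hν₂ : ν₂ Set.univ ≤ 1)
    (hν₁supp : ν₁ (Ω ×ˢ A)ᶜ = 0) (hν₂supp : ν₂ (Ω ×ˢ A)ᶜ = 0)
    (Θ₁ Θ₂ : EuclideanSpace ℝ (Fin d))
    (hΘ₁ : Θ₁ = ∫ z, z.2 ∂ν₁) (hΘ₂ : Θ₂ = ∫ z, z.2 ∂ν₂)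
    (hΘ₁M : ‖Θ₁‖ ≤ M) (hΘ₂M : ‖Θ₂‖ ≤ M)
    (p₁ p₂ α₁ α₂ : EuclideanSpace ℝ (Fin d)) (hα₁A : α₁ ∈ A) (hα₂A : α₂ ∈ A)
    (hfoc₁ : p₁ + (2 * ε) • α₁ + (deriv φ (inner ℝ α₁ Θ₁ : ℝ)) • Θ₁ = 0)
    (hfoc₂ : p₂ + (2 * ε) • α₂ + (deriv φ (inner ℝ α₂ Θ₂ : ℝ)) • Θ₂ = 0) :
    ‖α₁ - α₂‖ ≤ (2 * ε - Lφ * M ^ 2)⁻¹ * (‖p₁ - p₂‖ + ‖Θ₁ - Θ₂‖) :=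
  optimal_control_lipschitz_general A M ε Lφ hM h2ε hAball φ hLφ hφlip hLφsmall hφ'bdd Θ₁ Θ₂ hΘ₁M p₁
    p₂ α₁ α₂ hα₂A hfoc₁ hfoc₂
end

section
/- For the linear cost φ(z) = M₁z, the first-order condition p + 2εα + M₁Θ(ν) = 0 (with 2ε = 1 after normalization, i.e. p + α + M₁Θ(ν) = 0) defines α*(t,x,p;ν) = −p − M₁Θ(ν). If μ = Γ(p_t, m_t) satisfies the fixed point relation μ_t = (Id, α*(t,·,p_t(·);μ_t))_# m_t, then Θ(μ_t) = −(1 + M₁ m_t(Ω̄))^{−1} ∫_{Ω̄} p_t(x) m_t(x) dx, and consequently α*(t,x,p_t(x);μ_t) = −p_t(x) + M₁(1 + M₁ m_t(Ω̄))^{−1} ∫_{Ω̄} p_t(x) m_t(x) dx. -/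
open Real MeasureTheory Set

theorem integral_snd_map_prodMk {X E : Type*} [MeasurableSpace X] [NormedAddCommGroup E]
    [NormedSpace ℝ E] [MeasurableSpace E] [OpensMeasurableSpace E] [SecondCountableTopology E]
    {m : Measure X} {f : X → E} (hf : AEMeasurable f m) :
    ∫ z, z.2 ∂(m.map fun x => (x, f x)) = ∫ x, f x ∂m :=
  integral_map (aemeasurable_id'.prodMk hf) measurable_snd.aestronglyMeasurable

theorem eq_neg_inv_smul_of_eq_neg_sub_smul {K V : Type*} [Field K] [AddCommGroup V] [Module K V]
    {k : K} (hk : 1 + k ≠ 0) {Θ P : V} (h : Θ = -P - k • Θ) : Θ = -((1 + k)⁻¹ • P) := by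
  have h' : (1 + k) • Θ = -P := by
    rw [add_smul, one_smul]
    nth_rewrite 1 [h]
    abel
  rw [← smul_neg, ← h', smul_smul, inv_mul_cancel₀ hk, one_smul]

theorem linear_cost_closed_loop_general {d : ℕ}
    (M₁ : ℝ) (hM₁ : 0 < M₁)
    (m : Measure (EuclideanSpace ℝ (Fin d))) [IsFiniteMeasure m]
    (p : EuclideanSpace ℝ (Fin d) → EuclideanSpace ℝ (Fin d))
    (hpint : Integrable p m)
    (αs : EuclideanSpace ℝ (Fin d) → EuclideanSpace ℝ (Fin d))
    (hαsmeas : Measurable αs)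
    (μ : Measure (EuclideanSpace ℝ (Fin d) × EuclideanSpace ℝ (Fin d)))
    (hfix : μ = Measure.map (fun x => (x, αs x)) m)
    (hclosed : ∀ x, αs x = -p x - M₁ • (∫ z, z.2 ∂μ)) :
    (∫ z, z.2 ∂μ) = -((1 + M₁ * (m Set.univ).toReal)⁻¹ • ∫ x, p x ∂m) ∧
    ∀ x, αs x = -p x +
      (M₁ * (1 + M₁ * (m Set.univ).toReal)⁻¹) • ∫ x, p x ∂m := by
  have hk : 1 + M₁ * (m Set.univ).toReal ≠ 0 := by positivity
  have hΘ : ∫ z, z.2 ∂μ = -(∫ x, p x ∂m) - (M₁ * (m Set.univ).toReal) • ∫ z, z.2 ∂μ := calc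
    ∫ z, z.2 ∂μ = ∫ x, αs x ∂m := by rw [hfix, integral_snd_map_prodMk hαsmeas.aemeasurable]
    _ = ∫ x, (-p x - M₁ • ∫ z, z.2 ∂μ) ∂m := by simp only [← hclosed]
    _ = _ := by
      rw [integral_sub (f := fun x => -p x) hpint.neg (integrable_const _), integral_neg,
        integral_const, smul_smul, mul_comm, measureReal_def]
  have hΘval := eq_neg_inv_smul_of_eq_neg_sub_smul hk hΘ
  refine ⟨hΘval, fun x => ?_⟩
  rw [hclosed x, hΘval]
  module

/-- Remark 4.7 (linear-cost optimal control): if `α*(x) = −p(x) − M₁ Θ(μ)` and `μ` is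
the pushforward of `m` by `x ↦ (x, α*(x))` (the fixed-point relation), then
`Θ(μ) = −(1 + M₁ m(Ω̄))⁻¹ ∫ p dm`, and consequently the optimal control admits the
closed-loop form `α*(x) = −p(x) + M₁(1 + M₁ m(Ω̄))⁻¹ ∫ p dm`. -/
theorem linear_cost_closed_loop {d : ℕ}
    (Ω : Set (EuclideanSpace ℝ (Fin d))) (hΩ : IsCompact Ω)
    (M₁ : ℝ) (hM₁ : 0 < M₁)
    (m : Measure (EuclideanSpace ℝ (Fin d))) [IsFiniteMeasure m]
    (hm1 : m Set.univ ≤ 1) (hmsupp : m Ωᶜ = 0)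
    (p : EuclideanSpace ℝ (Fin d) → EuclideanSpace ℝ (Fin d))
    (hpint : Integrable p m)
    (αs : EuclideanSpace ℝ (Fin d) → EuclideanSpace ℝ (Fin d))
    (hαsmeas : Measurable αs)
    (μ : Measure (EuclideanSpace ℝ (Fin d) × EuclideanSpace ℝ (Fin d)))
    (hfix : μ = Measure.map (fun x => (x, αs x)) m)
    (hclosed : ∀ x, αs x = -p x - M₁ • (∫ z, z.2 ∂μ)) :
    (∫ z, z.2 ∂μ) = -((1 + M₁ * (m Set.univ).toReal)⁻¹ • ∫ x, p x ∂m) ∧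
    ∀ x, αs x = -p x +
      (M₁ * (1 + M₁ * (m Set.univ).toReal)⁻¹) • ∫ x, p x ∂m :=
  linear_cost_closed_loop_general M₁ hM₁ m p hpint αs hαsmeas μ hfix hclosed
end
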